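/- Let λ be a real number and set B(κ) = (λ/2)(e^{2iπκ} − 4e^{iπκ} + 3). Then |1 + B(κ) + B(κ)²/2| ≤ 1 holds for all κ ∈ [−1,1] if and only if −1/2 ≤ λ ≤ 0. In other words, the second-order forward (one-sided) finite-difference scheme combined with the second-order Runge–Kutta time integrator is von Neumann stable for the advection equation exactly when the stability number λ lies in [−1/2, 0]. -/

import Mathlib

/-- `Λ(κ) = (λ/2)(e^{2iπκ} − 4e^{iπκ} + 3)`, the amplification increment of the
second-order forward scheme at scaled wavenumber `κ` and stability number `λ`. -/
noncomputable def forward2Lambda (l κ : ℝ) : ℂ :=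
  ((l / 2 : ℝ) : ℂ) * (Complex.exp (2 * Complex.I * Real.pi * κ)
    - 4 * Complex.exp (Complex.I * Real.pi * κ) + 3)

private lemma keyH (μ t : ℝ) (h2 : μ ≤ 1/2) (h3 : 0 ≤ t) (h4 : t ≤ 2) :
    -8 + 8*μ*t^2 - 4*μ^2*t*(2+3*t) + μ^3*(2+3*t)^2 ≤ 0 := by
  nlinarith [mul_nonneg (by linarith : (0:ℝ) ≤ 1/2 - μ) (sq_nonneg (2*(2+3*t)^2*μ + (2+3*t)^2/2 - 4*t*(2+3*t))),
    mul_nonneg (mul_nonneg (by linarith : (0:ℝ) ≤ 1/2 - μ) (sq_nonneg (2+3*t))) (by nlinarith : (0:ℝ) ≤ 3 + t + 43*t^2/4),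
    mul_nonpos_of_nonneg_of_nonpos (sq_nonneg (2+3*t)) (by nlinarith : (t-2)*(17*t+30) ≤ 0),
    sq_nonneg (2+3*t), sq_nonneg t]

/-- With `B(κ) = (λ/2)(e^{2iπκ} − 4e^{iπκ} + 3)`, the RK2 amplification
factor `G(κ) = 1 + B(κ) + B(κ)²/2` satisfies `|G(κ)| ≤ 1` for all `κ ∈ [−1,1]` if and only
if `−1/2 ≤ λ ≤ 0`: the second-order forward scheme with the second-order Runge–Kutta time
integrator is von Neumann stable exactly when `λ ∈ [−1/2, 0]`. -/
theorem rk2_forward2_stability (l : ℝ) :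
    (∀ κ ∈ Set.Icc (-1 : ℝ) 1,
        ‖1 + forward2Lambda l κ + forward2Lambda l κ ^ 2 / 2‖ ≤ 1)
      ↔ (-(1 / 2 : ℝ) ≤ l ∧ l ≤ 0) := by
  constructor
  · intro h
    have h1 := h 1 ⟨by norm_num, le_refl 1⟩
    have hB1 : forward2Lambda l 1 = ((4*l : ℝ) : ℂ) := by
      rw [forward2Lambda]
      rw [show (2 * Complex.I * (Real.pi:ℂ) * ((1:ℝ):ℂ)) = 2*(Real.pi:ℂ)*Complex.I by push_cast; ring]
      rw [show (Complex.I * (Real.pi:ℂ) * ((1:ℝ):ℂ)) = (Real.pi:ℂ)*Complex.I by push_cast; ring]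
      rw [Complex.exp_two_pi_mul_I, Complex.exp_pi_mul_I]; push_cast; ring
    rw [hB1, show (1 + ((4*l:ℝ):ℂ) + ((4*l:ℝ):ℂ)^2/2) = ((1 + 4*l + 8*l^2 : ℝ):ℂ) by push_cast; ring,
      Complex.norm_real, Real.norm_eq_abs] at h1
    have h2 := abs_le.1 h1
    constructor
    · nlinarith [h2.1, h2.2]
    · nlinarith [h2.1, h2.2]
  · rintro ⟨hl1, hl2⟩ κ ⟨hκ1, hκ2⟩
    set c := Real.cos (Real.pi * κ) with hc
    set s := Real.sin (Real.pi * κ) with hs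
    have hp : s^2 = 1 - c^2 := by
      have := Real.sin_sq_add_cos_sq (Real.pi * κ); nlinarith
    have hz : Complex.exp (Complex.I * (Real.pi:ℂ) * (κ:ℂ)) = (c:ℂ) + (s:ℂ) * Complex.I := by
      rw [show Complex.I * (Real.pi:ℂ) * (κ:ℂ) = (((Real.pi*κ:ℝ)):ℂ) * Complex.I by push_cast; ring]
      rw [Complex.exp_mul_I, hc, hs, Complex.ofReal_cos, Complex.ofReal_sin]
    have hz2 : Complex.exp (2 * Complex.I * (Real.pi:ℂ) * (κ:ℂ))
        = (Complex.exp (Complex.I * (Real.pi:ℂ) * (κ:ℂ)))^2 := by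
      rw [← Complex.exp_nat_mul]; ring_nf
    have hpC : (s:ℂ)^2 = 1 - (c:ℂ)^2 := by exact_mod_cast congrArg (Complex.ofReal) hp
    set x : ℝ := l*(c-1)^2 with hxdef
    set y : ℝ := l*(s*(c-2)) with hydef
    have hB : forward2Lambda l κ = ((x:ℝ):ℂ) + ((y:ℝ):ℂ) * Complex.I := by
      rw [forward2Lambda, hz2, hz, hxdef, hydef]
      push_cast
      linear_combination (-(l:ℂ)/2) * hpC + ((l:ℂ)*(s:ℂ)^2/2) * Complex.I_sq
    have hG : 1 + forward2Lambda l κ + forward2Lambda l κ ^ 2 / 2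
        = ((1 + x + (x^2 - y^2)/2 : ℝ):ℂ) + ((y + x*y : ℝ):ℂ) * Complex.I := by
      rw [hB]; push_cast; linear_combination ((y:ℂ)^2/2) * Complex.I_sq
    rw [hG, Complex.norm_add_mul_I]
    rw [Real.sqrt_le_one]
    -- real inequality
    set t : ℝ := 1 - c with htdef
    set μ : ℝ := -l with hμdef
    have hc1 : c ≤ 1 := Real.cos_le_one _
    have hc2 : -1 ≤ c := Real.neg_one_le_cos _
    have ht0 : 0 ≤ t := by simp [htdef]; linarith
    have ht2 : t ≤ 2 := by simp [htdef]; linarith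
    have hμ2 : μ ≤ 1/2 := by simp [hμdef]; linarith
    have hμ0 : 0 ≤ μ := by simp [hμdef]; linarith
    have hx : x = -(μ * t^2) := by rw [hxdef, hμdef, htdef]; ring
    have hm : x^2 + y^2 = μ^2 * (t*(2+3*t)) := by
      rw [hxdef, hydef, hμdef, htdef]
      linear_combination (l^2*(c-2)^2) * hp
    have e : (1 + x + (x^2 - y^2)/2)^2 + (y + x*y)^2
        = 1 + 2*x + 2*x^2 + x*(x^2+y^2) + (x^2+y^2)^2/4 := by ring
    rw [e, hm, hx]
    have hH := keyH μ t hμ2 ht0 ht2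
    have hprod : (μ*t^2/4) * (-8 + 8*μ*t^2 - 4*μ^2*t*(2+3*t) + μ^3*(2+3*t)^2) ≤ 0 :=
      mul_nonpos_of_nonneg_of_nonpos (by positivity) hH
    nlinarith [hprod]
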